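/- arXiv:1004.0686 — 8 statements merged into one kernel-verified Lean document; each statement's English description precedes it below -/
import Mathlib

section
/- Let v_1, …, v_n be vectors in ℝ² with ⟨v_j, v_k⟩ ≥ 0 for all j, k. Then there exists an orthogonal transformation O of ℝ² such that O v_j lies in the nonnegative orthant ℝ²_{≥0} for all j. -/
/-!
Identify the plane with `ℂ`, where `⟪z, w⟫ = re (conj z * w)` and rotations are multiplications by
unit complex numbers. Multiplying by `conj p` for some nonzero `p = z j₀` puts every `z j` in the
closed right half-plane, on which `arg` orders the vectors by angle. If `q` is the nonzero `z j`
whose rotated argument is least, then `conj q * z j` has nonnegative real part by hypothesis, and its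
imaginary part is a positive multiple of `sin θ` for the angle `θ ∈ [0, π]` from `q` to `z j`;
so multiplication by `conj q / ‖q‖` moves every vector into the first quadrant.
-/

open Complex ComplexConjugate Finset

namespace Complex

lemma im_conj_mul_eq_norm_mul_norm_mul_sin (u w : ℂ) :
    (conj u * w).im = ‖u‖ * ‖w‖ * Real.sin (arg w - arg u) := by
  rw [Real.sin_sub, mul_im, conj_re, conj_im, ← norm_mul_cos_arg u, ← norm_mul_sin_arg u,
    ← norm_mul_cos_arg w, ← norm_mul_sin_arg w]
  ring

lemma im_conj_mul_nonneg_of_arg_le {u w : ℂ} (hu : 0 ≤ u.re) (hw : 0 ≤ w.re)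
    (harg : arg u ≤ arg w) : 0 ≤ (conj u * w).im := by
  have hu' := abs_le.1 (abs_arg_le_pi_div_two_iff.2 hu)
  have hw' := abs_le.1 (abs_arg_le_pi_div_two_iff.2 hw)
  rw [im_conj_mul_eq_norm_mul_norm_mul_sin]
  exact mul_nonneg (by positivity)
    (Real.sin_nonneg_of_nonneg_of_le_pi (sub_nonneg.2 harg) (by linarith))

lemma exists_circle_eq_conj_div_norm {q : ℂ} (hq : q ≠ 0) :
    ∃ a : Circle, (a : ℂ) = conj q / ‖q‖ := by
  refine ⟨Circle.exp (-arg q), ?_⟩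
  rw [Circle.coe_exp, eq_div_iff (by simpa using hq)]
  conv_rhs => rw [← norm_mul_exp_arg_mul_I q]
  rw [map_mul, conj_ofReal, ← exp_conj]
  simp [mul_comm]

theorem exists_circle_mul_re_nonneg_im_nonneg {ι : Type*} [Fintype ι] (z : ι → ℂ)
    (h : ∀ j k, 0 ≤ inner ℝ (z j) (z k)) :
    ∃ a : Circle, ∀ j, 0 ≤ (a * z j).re ∧ 0 ≤ (a * z j).im := by
  by_cases hzero : ∀ j, z j = 0
  · exact ⟨1, fun j => by simp [hzero j]⟩
  obtain ⟨j₀, hj₀⟩ := not_forall.1 hzero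
  have hre : ∀ j k, 0 ≤ (conj (z j) * z k).re := fun j k => by
    simpa only [Complex.inner, mul_comm] using h j k
  set p := z j₀
  obtain ⟨j₁, hj₁, hmin⟩ := (univ.filter (z · ≠ 0)).exists_min_image
    (fun j => arg (conj p * z j)) ⟨j₀, by simpa using hj₀⟩
  rw [mem_filter] at hj₁
  obtain ⟨a, ha⟩ := exists_circle_eq_conj_div_norm hj₁.2
  have him : ∀ j, 0 ≤ (conj (z j₁) * z j).im := fun j => by
    by_cases hj : z j = 0
    · simp [hj]
    have hrot := im_conj_mul_nonneg_of_arg_le (hre j₀ j₁) (hre j₀ j)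
      (hmin j (by simpa using hj))
    have hscale : conj (conj p * z j₁) * (conj p * z j) = normSq p * (conj (z j₁) * z j) := by
      rw [← mul_conj]; simp only [map_mul, conj_conj]; ring
    rw [hscale, im_ofReal_mul] at hrot
    exact nonneg_of_mul_nonneg_right hrot (normSq_pos.2 hj₀)
  refine ⟨a, fun j => ?_⟩
  rw [ha, div_mul_eq_mul_div, div_ofReal_re, div_ofReal_im]
  exact ⟨div_nonneg (hre _ _) (norm_nonneg _), div_nonneg (him j) (norm_nonneg _)⟩

end Complex

theorem exists_orthogonal_map_to_nonneg_orthant_dim_two {n : ℕ}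
    (v : Fin n → EuclideanSpace ℝ (Fin 2))
    (h : ∀ j k, (0:ℝ) ≤ inner ℝ (v j) (v k)) :
    ∃ O : EuclideanSpace ℝ (Fin 2) ≃ₗᵢ[ℝ] EuclideanSpace ℝ (Fin 2),
      ∀ j i, 0 ≤ O (v j) i := by
  let e := orthonormalBasisOneI.repr
  obtain ⟨a, ha⟩ := exists_circle_mul_re_nonneg_im_nonneg (fun j => e.symm (v j))
    (fun j k => by simpa only [LinearIsometryEquiv.inner_map_map] using h j k)
  refine ⟨e.symm.trans ((rotation a).trans e), fun j i => ?_⟩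
  fin_cases i
  · simpa [e] using (ha j).1
  · simpa [e] using (ha j).2
end

section
/- Let n = 2k+1 and φ(c, v, w) = cI + ε_v + ε*_v + i(ε_w − ε*_w) on Λℂ^k. If c² ≥ |v|² + |w|², then φ(c, v, w) is a positive semidefinite operator. -/
/-!
With `z = v + i w ∈ ℂ^k` the operator `φ(c, v, w) - c` is `A = ε_z + ε_z^*`, where
`ε_z = ε_v + i ε_w`. Since `ε_z² = 0` and `ε_z ε_z^* + ε_z^* ε_z = |z|²` (the canonical
anticommutation relation), `A` is self-adjoint with `A² = |v|² + |w|² ≤ c²`. Hence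
`‖A u‖ ≤ c ‖u‖`, and `⟨u, (c + A) u⟩ ≥ c ‖u‖² - ‖u‖ ‖A u‖ ≥ 0` by Cauchy–Schwarz.
-/

/-- The complexified exterior algebra `Λℂ^k`, realized concretely as the
complex Euclidean space with orthonormal basis indexed by subsets of `Fin k`
(the basis element for `S` being the wedge of the standard basis vectors with
indices in `S`, in increasing order), with the inner product induced by
`⟨∧vᵢ, ∧wⱼ⟩ = det(⟨vᵢ, wⱼ⟩)`. -/
abbrev ExtAlgC (k : ℕ) := EuclideanSpace ℂ (Finset (Fin k))

/-- Exterior multiplication `ε_v : u ↦ v ∧ u` by a real vector `v ∈ ℝ^k` on the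
complexified exterior algebra `Λℂ^k`, in the orthonormal basis indexed by
subsets of `Fin k`. -/
noncomputable def extMulC {k : ℕ} (v : Fin k → ℝ) : ExtAlgC k →ₗ[ℂ] ExtAlgC k where
  toFun u := WithLp.toLp 2 (fun S => ∑ i ∈ S,
    (-1 : ℂ) ^ (S.filter (fun j => j < i)).card * (v i : ℂ) * u (S.erase i))
  map_add' u u' := by
    ext S
    simp only [PiLp.toLp_apply, PiLp.add_apply, mul_add, Finset.sum_add_distrib]
  map_smul' c u := by
    ext S
    simp only [PiLp.toLp_apply, PiLp.smul_apply, smul_eq_mul, Finset.mul_sum, RingHom.id_apply]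
    exact Finset.sum_congr rfl fun i _ => by ring

open scoped ComplexOrder

open Finset
open scoped ComplexConjugate

theorem add_star_self_mul_self {R : Type*} [Ring R] [StarRing R] {e : R} (he : e * e = 0) :
    (e + star e) * (e + star e) = e * star e + star e * e := by
  have hstar : star e * star e = 0 := by rw [← star_mul, he, star_zero]
  rw [add_mul, mul_add, mul_add, he, hstar, zero_add, add_zero]

theorem Finset.sum_sum_mem_eq_sum_sum_compl_insert {α M : Type*} [Fintype α] [DecidableEq α]
    [AddCommMonoid M] (f : Finset α → α → M) :
    ∑ S, ∑ i ∈ S, f S i = ∑ T, ∑ i ∈ Tᶜ, f (insert i T) i := by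
  rw [sum_sigma', sum_sigma']
  refine sum_nbij' (fun p => ⟨p.1.erase p.2, p.2⟩) (fun p => ⟨insert p.2 p.1, p.2⟩)
    ?_ ?_ ?_ ?_ ?_ <;> rintro ⟨S, i⟩ h <;> simp_all

section

variable {𝕜 E : Type*} [RCLike 𝕜] [NormedAddCommGroup E] [InnerProductSpace 𝕜 E]

open RCLike
open scoped InnerProductSpace

theorem LinearMap.IsSymmetric.norm_apply_le_of_mul_self_eq {A : E →ₗ[𝕜] E} (hA : A.IsSymmetric)
    {r c : ℝ} (hsq : A * A = (r : 𝕜) • 1) (hrc : r ≤ c ^ 2) (hc : 0 ≤ c) (x : E) :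
    ‖A x‖ ≤ c * ‖x‖ := by
  have hnorm : ‖A x‖ ^ 2 = r * ‖x‖ ^ 2 := by
    rw [← inner_self_eq_norm_sq (𝕜 := 𝕜), ← inner_self_eq_norm_sq (𝕜 := 𝕜), hA,
      ← Module.End.mul_apply, hsq]
    simp [inner_smul_right]
  refine pow_le_pow_iff_left₀ (norm_nonneg _) (by positivity) two_ne_zero |>.1 ?_
  rw [hnorm, mul_pow]
  gcongr

theorem LinearMap.IsSymmetric.isPositive_smul_one_add {A : E →ₗ[𝕜] E} (hA : A.IsSymmetric)
    {r c : ℝ} (hsq : A * A = (r : 𝕜) • 1) (hrc : r ≤ c ^ 2) (hc : 0 ≤ c) :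
    ((c : 𝕜) • 1 + A).IsPositive := by
  refine ⟨(LinearMap.IsSymmetric.id.smul (RCLike.conj_ofReal c)).add hA, fun x => ?_⟩
  have hAx : -re ⟪A x, x⟫_𝕜 ≤ c * ‖x‖ * ‖x‖ :=
    calc -re ⟪A x, x⟫_𝕜 ≤ ‖A x‖ * ‖x‖ := by simpa using re_inner_le_norm (-A x) x
      _ ≤ c * ‖x‖ * ‖x‖ := by gcongr; exact hA.norm_apply_le_of_mul_self_eq hsq hrc hc x
  have : re ⟪((c : 𝕜) • 1 + A) x, x⟫_𝕜 = c * ‖x‖ * ‖x‖ + re ⟪A x, x⟫_𝕜 := by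
    simp [inner_add_left, inner_smul_left, sq, mul_assoc]
  linarith

end

namespace ExtAlgC

variable {k : ℕ}

def orderSign (i j : Fin k) : ℂ := if j < i then -1 else 1

theorem orderSign_self (i : Fin k) : orderSign i i = 1 := by simp [orderSign]

theorem orderSign_swap {i j : Fin k} (h : i ≠ j) : orderSign j i = -orderSign i j := by
  rcases h.lt_or_gt with h | h <;> simp [orderSign, h, h.not_gt]

theorem orderSign_mul_self (i j : Fin k) : orderSign i j * orderSign i j = 1 := by
  unfold orderSign; split_ifs <;> norm_num

/-- The sign `(-1)^#{j ∈ S | j < i}` acquired by moving `e_i` into place in `e_i ∧ e_S`. -/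
def extSign (S : Finset (Fin k)) (i : Fin k) : ℂ := (-1) ^ #{j ∈ S | j < i}

theorem extSign_mul_self (S : Finset (Fin k)) (i : Fin k) : extSign S i * extSign S i = 1 := by
  simp [extSign, ← pow_add, ← two_mul, pow_mul]

theorem conj_extSign (S : Finset (Fin k)) (i : Fin k) : conj (extSign S i) = extSign S i := by
  simp [extSign]

theorem extSign_insert {S : Finset (Fin k)} {j : Fin k} (hj : j ∉ S) (i : Fin k) :
    extSign (insert j S) i = orderSign i j * extSign S i := by
  unfold extSign orderSign
  rw [filter_insert]
  split_ifs with h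
  · rw [card_insert_of_notMem (by simp [hj]), pow_succ]; ring
  · ring

theorem extSign_erase {S : Finset (Fin k)} {j : Fin k} (hj : j ∈ S) (i : Fin k) :
    extSign (S.erase j) i = orderSign i j * extSign S i := by
  rw [← insert_erase hj, extSign_insert (notMem_erase j S), ← mul_assoc, orderSign_mul_self,
    one_mul, insert_erase hj]

noncomputable def extMul (z : Fin k → ℂ) : ExtAlgC k →ₗ[ℂ] ExtAlgC k where
  toFun u := WithLp.toLp 2 fun S => ∑ i ∈ S, extSign S i * z i * u (S.erase i)
  map_add' u u' := by ext S; simp only [PiLp.add_apply, mul_add, sum_add_distrib]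
  map_smul' a u := by
    ext S
    simp only [PiLp.smul_apply, smul_eq_mul, mul_sum, RingHom.id_apply]
    exact sum_congr rfl fun i _ => by ring

noncomputable def intMul (z : Fin k → ℂ) : ExtAlgC k →ₗ[ℂ] ExtAlgC k where
  toFun u := WithLp.toLp 2 fun S => ∑ i ∈ Sᶜ, extSign S i * conj (z i) * u (insert i S)
  map_add' u u' := by ext S; simp only [PiLp.add_apply, mul_add, sum_add_distrib]
  map_smul' a u := by
    ext S
    simp only [PiLp.smul_apply, smul_eq_mul, mul_sum, RingHom.id_apply]
    exact sum_congr rfl fun i _ => by ring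

theorem extMul_apply (z : Fin k → ℂ) (u : ExtAlgC k) (S : Finset (Fin k)) :
    extMul z u S = ∑ i ∈ S, extSign S i * z i * u (S.erase i) := rfl

theorem intMul_apply (z : Fin k → ℂ) (u : ExtAlgC k) (S : Finset (Fin k)) :
    intMul z u S = ∑ i ∈ Sᶜ, extSign S i * conj (z i) * u (insert i S) := rfl

theorem extMulC_eq_extMul (v : Fin k → ℝ) : extMulC v = extMul fun i => (v i : ℂ) := rfl

theorem extMul_add_smul (z z' : Fin k → ℂ) (a : ℂ) :
    extMul z + a • extMul z' = extMul (z + a • z') := by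
  ext u S
  simp only [LinearMap.add_apply, LinearMap.smul_apply, PiLp.add_apply, PiLp.smul_apply,
    extMul_apply, Pi.add_apply, Pi.smul_apply, smul_eq_mul, mul_sum, ← sum_add_distrib]
  exact sum_congr rfl fun i _ => by ring

theorem adjoint_extMul (z : Fin k → ℂ) : (extMul z).adjoint = intMul z := by
  refine ((LinearMap.eq_adjoint_iff _ _).2 fun x y => ?_).symm
  simp only [PiLp.inner_apply, RCLike.inner_apply', extMul_apply, intMul_apply, map_sum,
    map_mul, sum_mul, mul_sum, Complex.conj_conj]
  rw [sum_sum_mem_eq_sum_sum_compl_insert]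
  refine sum_congr rfl fun T _ => sum_congr rfl fun i hi => ?_
  rw [mem_compl] at hi
  rw [extSign_insert hi, erase_insert hi, orderSign_self, conj_extSign]
  ring

theorem extMul_mul_self (z : Fin k → ℂ) : extMul z * extMul z = 0 := by
  ext u S
  set f : Fin k → Fin k → ℂ := fun i j =>
    extSign S i * extSign (S.erase i) j * z i * z j * u ((S.erase i).erase j)
  have hf : ∀ i ∈ S, ∀ j ∈ S.erase i, f j i = -f i j := by
    intro i hi j hj
    have hji : j ≠ i := ne_of_mem_erase hj
    simp only [f, extSign_erase hi, extSign_erase (mem_of_mem_erase hj), orderSign_swap hji,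
      erase_right_comm (a := i)]
    ring
  have hsum : (extMul z * extMul z) u S = ∑ i ∈ S, ∑ j ∈ S.erase i, f i j := by
    simp only [Module.End.mul_apply, extMul_apply, mul_sum, f]
    exact sum_congr rfl fun i _ => sum_congr rfl fun j _ => by ring
  have hswap : ∑ i ∈ S, ∑ j ∈ S.erase i, f i j = ∑ i ∈ S, ∑ j ∈ S.erase i, f j i :=
    sum_comm' fun i j => by simp only [mem_erase]; tauto
  rw [LinearMap.zero_apply, PiLp.zero_apply, hsum]
  refine self_eq_neg.1 (hswap.trans ?_)
  simp only [← sum_neg_distrib]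
  exact sum_congr rfl fun i hi => sum_congr rfl (hf i hi)

theorem extMul_mul_intMul_apply (z : Fin k → ℂ) (u : ExtAlgC k) (S : Finset (Fin k)) :
    (extMul z * intMul z) u S = (∑ i ∈ S, (Complex.normSq (z i) : ℂ)) * u S +
      ∑ i ∈ S, ∑ j ∈ Sᶜ, orderSign j i * extSign S i * extSign S j * z i * conj (z j) *
        u (insert j (S.erase i)) := by
  simp only [Module.End.mul_apply, extMul_apply, intMul_apply, sum_mul, ← sum_add_distrib]
  refine sum_congr rfl fun i hi => ?_
  rw [compl_erase, sum_insert (notMem_compl.2 hi), insert_erase hi, mul_add, mul_sum,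
    extSign_erase hi, orderSign_self, ← Complex.mul_conj]
  have hsign := extSign_mul_self S i
  congr 1
  · linear_combination z i * conj (z i) * u S * hsign
  · exact sum_congr rfl fun j hj => by rw [extSign_erase hi]; ring

theorem intMul_mul_extMul_apply (z : Fin k → ℂ) (u : ExtAlgC k) (S : Finset (Fin k)) :
    (intMul z * extMul z) u S = (∑ j ∈ Sᶜ, (Complex.normSq (z j) : ℂ)) * u S +
      ∑ j ∈ Sᶜ, ∑ i ∈ S, orderSign i j * extSign S i * extSign S j * z i * conj (z j) *
        u (insert j (S.erase i)) := by
  simp only [Module.End.mul_apply, extMul_apply, intMul_apply, sum_mul, ← sum_add_distrib]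
  refine sum_congr rfl fun j hj => ?_
  rw [mem_compl] at hj
  rw [sum_insert hj, erase_insert hj, mul_add, mul_sum, extSign_insert hj, orderSign_self,
    ← Complex.mul_conj]
  have hsign := extSign_mul_self S j
  congr 1
  · linear_combination z j * conj (z j) * u S * hsign
  · refine sum_congr rfl fun i hi => ?_
    rw [extSign_insert hj, erase_insert_of_ne (ne_of_mem_of_not_mem hi hj).symm]
    ring

theorem extMul_mul_intMul_add (z : Fin k → ℂ) :
    extMul z * intMul z + intMul z * extMul z = ((∑ i, Complex.normSq (z i) : ℝ) : ℂ) • 1 := by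
  ext u S
  rw [LinearMap.add_apply, PiLp.add_apply, extMul_mul_intMul_apply, intMul_mul_extMul_apply,
    sum_comm (s := Sᶜ), add_add_add_comm, ← add_mul, sum_add_sum_compl, ← sum_add_distrib]
  have hcancel : ∀ i ∈ S, ∀ j ∈ Sᶜ,
      orderSign j i * extSign S i * extSign S j * z i * conj (z j) * u (insert j (S.erase i)) +
        orderSign i j * extSign S i * extSign S j * z i * conj (z j) *
          u (insert j (S.erase i)) = 0 := fun i hi j hj => by
    rw [orderSign_swap (ne_of_mem_of_not_mem hi (mem_compl.1 hj)).symm]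
    ring
  simp [← sum_add_distrib, sum_eq_zero fun i hi => sum_eq_zero (hcancel i hi)]

end ExtAlgC

open ExtAlgC

theorem cliffordPhi_posSemidef {k : ℕ} (c : ℝ) (v w : Fin k → ℝ)
    (h : ∑ i, v i ^ 2 + ∑ i, w i ^ 2 ≤ c ^ 2) (hc : 0 ≤ c) :
    let T := (c : ℂ) • LinearMap.id + extMulC v + (extMulC v).adjoint
      + Complex.I • (extMulC w - (extMulC w).adjoint)
    ∀ u : ExtAlgC k, 0 ≤ (inner ℂ u (T u) : ℂ) := by
  intro T u
  set z : Fin k → ℂ := fun i => v i + Complex.I * w i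
  have hE : extMulC v + Complex.I • extMulC w = extMul z := by
    rw [extMulC_eq_extMul, extMulC_eq_extMul, extMul_add_smul]; rfl
  have hT : T = (c : ℂ) • 1 + (extMul z + star (extMul z)) := by
    simp only [T, ← hE, star_add, star_smul, LinearMap.star_eq_adjoint, Complex.star_def,
      Complex.conj_I]
    module
  have hr : ∑ i, Complex.normSq (z i) = ∑ i, v i ^ 2 + ∑ i, w i ^ 2 := by
    simp [z, mul_comm Complex.I, Complex.normSq_add_mul_I, sum_add_distrib]
  have hsq : (extMul z + star (extMul z)) * (extMul z + star (extMul z)) =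
      ((∑ i, Complex.normSq (z i) : ℝ) : ℂ) • 1 := by
    rw [add_star_self_mul_self (extMul_mul_self z), LinearMap.star_eq_adjoint, adjoint_extMul,
      extMul_mul_intMul_add]
  rw [hT]
  exact ((LinearMap.isSymmetric_iff_isSelfAdjoint _).2 (.add_star_self _)).isPositive_smul_one_add
    hsq (hr.trans_le h) hc |>.inner_nonneg_right u
end

section
/- Let C_n = {(x_1,…,x_n) ∈ ℝ^n : x_1 ≥ 0, x_1² ≥ x_2² + ⋯ + x_n²} and d = 2^{⌊n/2⌋}. There exists a real linear map φ from ℝ^n to the self-adjoint d×d complex matrices such that (1/d)·Tr(φ(x)φ(y)) = ⟨x, y⟩ for all x, y, and φ maps C_n into the cone of positive semidefinite matrices. -/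
/-!
On `(ℂ²)^{⊗m}` the Jordan–Wigner construction gives `2m` Hermitian involutions `γᵢ` that pairwise
anticommute; with `m = ⌊n/2⌋` this is enough for `n - 1` of them. Put
`φ x = x₀ • 1 + ∑ xᵢ • γᵢ`. Anticommutation gives `(∑ xᵢ • γᵢ)² = (∑ xᵢ²) • 1`, so the eigenvalues
of `φ x` are `x₀ ± (∑ xᵢ²)^(1/2)`, nonnegative on the cone. Anticommuting involutions are traceless
and trace-orthogonal, which makes `φ` an isometry for the normalized trace form.
-/

open scoped ComplexOrder Kronecker

open Matrix

namespace Matrix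

variable {R l m n p : Type*}

theorem neg_kronecker [Ring R] (A : Matrix l m R) (B : Matrix n p R) :
    (-A) ⊗ₖ B = -(A ⊗ₖ B) := by
  ext; simp

theorem kronecker_neg [Ring R] (A : Matrix l m R) (B : Matrix n p R) :
    A ⊗ₖ (-B) = -(A ⊗ₖ B) := by
  ext; simp

theorem trace_mul_eq_zero_of_mul_eq_neg [Fintype n] [CommRing R] [NoZeroDivisors R] [CharZero R]
    {A B : Matrix n n R} (h : A * B = -(B * A)) : (A * B).trace = 0 := by
  rw [← CharZero.eq_neg_self_iff]
  nth_rw 1 [h, trace_neg, trace_mul_comm]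

end Matrix

theorem sum_smul_mul_self_of_anticomm {ι S A : Type*} [CommRing S] [Ring A] [Algebra S A]
    (s : Finset ι) (c : ι → S) (g : ι → A) (hsq : ∀ i ∈ s, g i * g i = 1)
    (hanti : ∀ i ∈ s, ∀ j ∈ s, i ≠ j → g i * g j = -(g j * g i)) :
    (∑ i ∈ s, c i • g i) * (∑ i ∈ s, c i • g i) = (∑ i ∈ s, c i ^ 2) • 1 := by
  classical
  induction s using Finset.induction_on with
  | empty => simp
  | insert a s ha ih =>
    set t := ∑ i ∈ s, c i • g i
    have hcross : c a • g a * t + t * (c a • g a) = 0 := by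
      rw [smul_mul_assoc, mul_smul_comm, ← smul_add, Finset.sum_mul, Finset.mul_sum,
        ← Finset.sum_add_distrib, Finset.sum_eq_zero, smul_zero]
      intro i hi
      rw [smul_mul_assoc, mul_smul_comm, ← smul_add,
        hanti a (Finset.mem_insert_self a s) i (Finset.mem_insert_of_mem hi)
          (by rintro rfl; exact ha hi),
        neg_add_cancel, smul_zero]
    have ht : t * t = (∑ i ∈ s, c i ^ 2) • 1 :=
      ih (fun i hi => hsq i (Finset.mem_insert_of_mem hi))
        fun i hi j hj => hanti i (Finset.mem_insert_of_mem hi) j (Finset.mem_insert_of_mem hj)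
    rw [Finset.sum_insert ha, Finset.sum_insert ha, add_mul, mul_add, mul_add, ht,
      smul_mul_smul_comm, hsq a (Finset.mem_insert_self a s), add_smul, sq]
    calc _ = (c a * c a) • (1 : A) + (∑ i ∈ s, c i ^ 2) • 1
          + (c a • g a * t + t * (c a • g a)) := by abel
      _ = _ := by rw [hcross, add_zero]

theorem Matrix.IsHermitian.posSemidef_smul_one_add {𝕜 N : Type*} [RCLike 𝕜] [Fintype N]
    [DecidableEq N] {A : Matrix N N 𝕜} (hA : A.IsHermitian) {c t : ℝ} (hc : 0 ≤ c)
    (hA2 : A * A = c • 1) (ht : 0 ≤ t) (hct : c ≤ t ^ 2) : (t • 1 + A).PosSemidef := by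
  rcases ht.eq_or_lt with rfl | ht
  · have hA0 : A = 0 := by
      refine conjTranspose_mul_self_eq_zero.mp ?_
      rw [hA.eq, hA2, le_antisymm (by simpa using hct) hc, zero_smul]
    simpa [hA0] using PosSemidef.zero
  · -- `(t • 1 + A)² = 2t • (t • 1 + A) - (t² - c) • 1`
    have key : t • 1 + A = (2 * t)⁻¹ • ((t • 1 + A)ᴴ * (t • 1 + A) + (t ^ 2 - c) • 1) := by
      rw [conjTranspose_add, conjTranspose_smul, conjTranspose_one, hA.eq, star_trivial,
        add_mul, mul_add, mul_add, hA2]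
      simp only [smul_mul_assoc, mul_smul_comm, one_mul, mul_one, smul_smul]
      match_scalars <;> field_simp <;> ring
    rw [key]
    exact ((posSemidef_conjTranspose_mul_self _).add
      (PosSemidef.one.smul (sub_nonneg.2 hct))).smul (by positivity)

theorem trace_linearCombination_mul_linearCombination {ι 𝕜 N : Type*} [Fintype ι]
    [DecidableEq ι] [RCLike 𝕜] [Fintype N] {β : ι → Matrix N N 𝕜} {d : 𝕜}
    (hβ : ∀ i j, (β i * β j).trace = if i = j then d else 0) (x y : ι → ℝ) :
    (Fintype.linearCombination ℝ β x * Fintype.linearCombination ℝ β y).trace =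
      d * ((∑ i, x i * y i : ℝ) : 𝕜) := by
  rw [Fintype.linearCombination_apply, Fintype.linearCombination_apply, Finset.sum_mul_sum]
  simp only [smul_mul_smul_comm, trace_sum, trace_smul, hβ, smul_ite, smul_zero, Finset.sum_ite_eq,
    Finset.mem_univ, if_true, RCLike.real_smul_eq_coe_mul]
  push_cast
  rw [← Finset.sum_mul, mul_comm]

/-- A matrix representation of the Clifford algebra of the Euclidean space `ℝ^ι`. -/
structure IsCliffordFamily {ι N R : Type*} [Fintype N] [DecidableEq N] [Ring R] [Star R]
    (γ : ι → Matrix N N R) : Prop where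
  isHermitian : ∀ i, (γ i).IsHermitian
  mul_self : ∀ i, γ i * γ i = 1
  anticomm : ∀ i j, i ≠ j → γ i * γ j = -(γ j * γ i)

namespace IsCliffordFamily

variable {ι κ N M R : Type*} [Fintype N] [DecidableEq N] [Fintype M] [DecidableEq M]

section Ring

variable [Ring R] [StarRing R] {γ : ι → Matrix N N R}

theorem comp (hγ : IsCliffordFamily γ) {f : κ → ι} (hf : f.Injective) :
    IsCliffordFamily (γ ∘ f) :=
  ⟨fun i => hγ.isHermitian (f i), fun i => hγ.mul_self (f i),
    fun i j hij => hγ.anticomm (f i) (f j) (hf.ne hij)⟩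

theorem reindex (hγ : IsCliffordFamily γ) (e : N ≃ M) :
    IsCliffordFamily fun i => Matrix.reindex e e (γ i) := by
  refine ⟨fun i => (hγ.isHermitian i).submatrix _, fun i => ?_, fun i j hij => ?_⟩
  · rw [reindex_apply, submatrix_mul_equiv, hγ.mul_self, submatrix_one_equiv]
  · rw [reindex_apply, reindex_apply, submatrix_mul_equiv, submatrix_mul_equiv,
      hγ.anticomm i j hij]
    rfl

end Ring

/-- The Jordan–Wigner step: `σ none` serves as the sign twist that makes the old generators
anticommute with the new ones. -/
theorem kronecker [CommRing R] [StarRing R] {γ : ι → Matrix N N R} {σ : Option κ → Matrix M M R}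
    (hγ : IsCliffordFamily γ) (hσ : IsCliffordFamily σ) :
    IsCliffordFamily
      (Sum.elim (fun i => γ i ⊗ₖ σ none) fun a => (1 : Matrix N N R) ⊗ₖ σ (some a)) := by
  refine ⟨?_, ?_, ?_⟩
  · rintro (i | a) <;> simp only [IsHermitian, Sum.elim_inl, Sum.elim_inr,
      conjTranspose_kronecker, conjTranspose_one, (hγ.isHermitian _).eq, (hσ.isHermitian _).eq]
  · rintro (i | a) <;> simp only [Sum.elim_inl, Sum.elim_inr, ← mul_kronecker_mul, hγ.mul_self,
      hσ.mul_self, mul_one, one_kronecker_one]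
  · rintro (i | a) (j | b) hij <;>
      simp only [Sum.elim_inl, Sum.elim_inr, ← mul_kronecker_mul, mul_one, one_mul, hσ.mul_self]
    · rw [hγ.anticomm i j (by rintro rfl; exact hij rfl), neg_kronecker]
    · rw [hσ.anticomm none (some b) (Option.some_ne_none b).symm, kronecker_neg]
    · rw [hσ.anticomm (some a) none (Option.some_ne_none a), kronecker_neg]
    · rw [hσ.anticomm (some a) (some b) (by rintro ⟨⟩; exact hij rfl), kronecker_neg]

theorem trace_eq_zero [CommRing R] [StarRing R] [NoZeroDivisors R] [CharZero R]
    {γ : ι → Matrix N N R} (hγ : IsCliffordFamily γ) {i j : ι} (hij : i ≠ j) :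
    (γ i).trace = 0 := by
  have h : γ i * γ j * γ j = -(γ j * (γ i * γ j)) := by
    rw [← mul_assoc, hγ.anticomm j i hij.symm, neg_mul, neg_neg]
  calc (γ i).trace = (γ i * γ j * γ j).trace := by rw [mul_assoc, hγ.mul_self j, mul_one]
    _ = 0 := trace_mul_eq_zero_of_mul_eq_neg h

theorem trace_mul_vecCons_one {𝕜 : Type*} [RCLike 𝕜] {k : ℕ} {γ : Fin k → Matrix N N 𝕜}
    (hγ : IsCliffordFamily γ) (htr : ∀ i, (γ i).trace = 0) (i j : Fin (k + 1)) :
    (vecCons 1 γ i * vecCons 1 γ j).trace = if i = j then (Fintype.card N : 𝕜) else 0 := by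
  cases i using Fin.cases <;> cases j using Fin.cases
  · simp
  · simp [htr, (Fin.succ_ne_zero _).symm]
  · simp [htr, Fin.succ_ne_zero]
  · simp only [cons_val_succ, Fin.succ_inj]
    split_ifs with hij
    · rw [hij, hγ.mul_self, trace_one]
    · exact trace_mul_eq_zero_of_mul_eq_neg (hγ.anticomm _ _ hij)

theorem posSemidef_smul_one_add_sum [Fintype ι] {𝕜 : Type*} [RCLike 𝕜]
    {γ : ι → Matrix N N 𝕜} (hγ : IsCliffordFamily γ) {t : ℝ} {v : ι → ℝ} (ht : 0 ≤ t)
    (hv : ∑ i, v i ^ 2 ≤ t ^ 2) : (t • 1 + ∑ i, v i • γ i).PosSemidef :=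
  have hA : (∑ i, v i • γ i).IsHermitian :=
    isSelfAdjoint_sum _ fun i _ => (hγ.isHermitian i).smul (IsSelfAdjoint.all (v i))
  hA.posSemidef_smul_one_add (Finset.sum_nonneg fun i _ => sq_nonneg (v i))
    (sum_smul_mul_self_of_anticomm _ v γ (fun i _ => hγ.mul_self i)
      fun i _ j _ hij => hγ.anticomm i j hij) ht hv

end IsCliffordFamily

/-- The Pauli matrices, with `σ_z` at `none` and `σ_x`, `σ_y` at `some 0`, `some 1`. -/
def pauli : Option (Fin 2) → Matrix (Fin 2) (Fin 2) ℂ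
  | none => !![1, 0; 0, -1]
  | some 0 => !![0, 1; 1, 0]
  | some 1 => !![0, -Complex.I; Complex.I, 0]

theorem isCliffordFamily_pauli : IsCliffordFamily pauli := by
  refine ⟨fun i => ?_, fun i => ?_, fun i j hij => ?_⟩
  · fin_cases i <;> ext a b <;> fin_cases a <;> fin_cases b <;> simp [pauli]
  · fin_cases i <;> simp [pauli, one_fin_two]
  · fin_cases i <;> fin_cases j <;> simp_all [pauli]

theorem exists_isCliffordFamily_fin (m : ℕ) :
    ∃ γ : Fin (2 * m) → Matrix (Fin (2 ^ m)) (Fin (2 ^ m)) ℂ, IsCliffordFamily γ := by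
  induction m with
  | zero => exact ⟨Fin.elim0, fun i => i.elim0, fun i => i.elim0, fun i => i.elim0⟩
  | succ m ih =>
    obtain ⟨γ, hγ⟩ := ih
    exact ⟨_, ((hγ.kronecker isCliffordFamily_pauli).reindex finProdFinEquiv).comp
      finSumFinEquiv.symm.injective⟩

theorem exists_isCliffordFamily_and_trace_eq_zero (k : ℕ) :
    ∃ γ : Fin k → Matrix (Fin (2 ^ ((k + 1) / 2))) (Fin (2 ^ ((k + 1) / 2))) ℂ,
      IsCliffordFamily γ ∧ ∀ i, (γ i).trace = 0 := by
  obtain ⟨Γ, hΓ⟩ := exists_isCliffordFamily_fin ((k + 1) / 2)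
  refine ⟨Γ ∘ Fin.castLE (by omega), hΓ.comp (Fin.castLE_injective _), fun i => ?_⟩
  have : Nontrivial (Fin (2 * ((k + 1) / 2))) :=
    Fin.nontrivial_iff_two_le.2 (by have := i.pos; omega)
  obtain ⟨j, hj⟩ := exists_ne (Fin.castLE (by omega) i : Fin (2 * ((k + 1) / 2)))
  exact hΓ.trace_eq_zero hj.symm

theorem exists_isometric_embedding_of_cone_into_posSemidef (n : ℕ) (hn : 0 < n) :
    ∃ φ : (Fin n → ℝ) →ₗ[ℝ] Matrix (Fin (2 ^ (n / 2))) (Fin (2 ^ (n / 2))) ℂ,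
      (∀ x, (φ x).IsHermitian) ∧
      (∀ x y : Fin n → ℝ,
        (1 / (2 ^ (n / 2) : ℂ)) * (φ x * φ y).trace = ((∑ i, x i * y i : ℝ) : ℂ)) ∧
      (∀ x : Fin n → ℝ, 0 ≤ x ⟨0, hn⟩ →
        ∑ i ∈ Finset.univ.erase ⟨0, hn⟩, x i ^ 2 ≤ x ⟨0, hn⟩ ^ 2 →
        (φ x).PosSemidef) := by
  obtain ⟨k, rfl⟩ := Nat.exists_eq_add_one_of_ne_zero hn.ne'
  obtain ⟨γ, hγ, htr⟩ := exists_isCliffordFamily_and_trace_eq_zero k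
  refine ⟨Fintype.linearCombination ℝ (vecCons 1 γ), fun x => ?_, fun x y => ?_,
    fun x h0 hx => ?_⟩
  · refine isSelfAdjoint_sum _ fun i _ => IsHermitian.smul ?_ (IsSelfAdjoint.all (x i))
    exact i.cases (by simp) (by simpa using hγ.isHermitian)
  · rw [trace_linearCombination_mul_linearCombination (hγ.trace_mul_vecCons_one htr),
      Fintype.card_fin, ← mul_assoc, Nat.cast_pow, Nat.cast_ofNat,
      one_div_mul_cancel (by norm_num), one_mul, RCLike.ofReal_eq_complex_ofReal]
  · rw [Fin.zero_eta] at h0 hx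
    have hsum : ∑ i : Fin k, x i.succ ^ 2 ≤ x 0 ^ 2 := by
      have := Finset.add_sum_erase Finset.univ (fun i => x i ^ 2) (Finset.mem_univ 0)
      rw [Fin.sum_univ_succ] at this
      linarith
    rw [Fintype.linearCombination_apply, Fin.sum_univ_succ]
    simpa using hγ.posSemidef_smul_one_add_sum h0 hsum
end

section
/- For k ∈ ℤ/6ℤ let v_k = (1, cos(2πk/6), sin(2πk/6)) ∈ ℝ³. There is no d ∈ ℕ and vectors a_0, …, a_5 ∈ ℝ^d with all coordinates nonnegative such that ⟨a_j, a_k⟩ = ⟨v_j, v_k⟩ for all j, k ∈ ℤ/6ℤ. -/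
set_option maxHeartbeats 2000000

open Real

private lemma hex_key_ineq (x0 x1 x2 x3 x4 x5 : ℝ)
    (h0 : 0 ≤ x0) (h1 : 0 ≤ x1) (h2 : 0 ≤ x2) (h3 : 0 ≤ x3) (h4 : 0 ≤ x4) (h5 : 0 ≤ x5)
    (p03 : x0 * x3 = 0) (p14 : x1 * x4 = 0) (p25 : x2 * x5 = 0)
    (e1 : x0 + x3 = x1 + x4) (e2 : x1 + x4 = x2 + x5) :
    0 ≤ x0 * x4 + x1 * x3 + x1 * x5 + x2 * x4 - x0 * x5 - x2 * x3 := by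
  rcases mul_eq_zero.1 p03 with h | h <;>
  rcases mul_eq_zero.1 p14 with h' | h' <;>
  rcases mul_eq_zero.1 p25 with h'' | h'' <;>
  subst h h' h'' <;> nlinarith

theorem hexagon_not_embeddable_in_nonneg_orthant :
    ¬ ∃ (d : ℕ) (a : ZMod 6 → Fin d → ℝ),
      (∀ k i, 0 ≤ a k i) ∧
      ∀ j k : ZMod 6, ∑ i, a j i * a k i =
        ∑ i, (![1, cos (2 * π * (j.val : ℝ) / 6), sin (2 * π * (j.val : ℝ) / 6)] i) *
             (![1, cos (2 * π * (k.val : ℝ) / 6), sin (2 * π * (k.val : ℝ) / 6)] i) := by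
  rintro ⟨d, a, hnn, hG⟩
  -- trig values
  have c0 : cos (2 * π * ((0:ℕ) : ℝ) / 6) = 1 := by norm_num
  have s0 : sin (2 * π * ((0:ℕ) : ℝ) / 6) = 0 := by norm_num
  have c1 : cos (2 * π * ((1:ℕ) : ℝ) / 6) = 1/2 := by
    rw [show 2 * π * ((1:ℕ):ℝ) / 6 = π/3 by push_cast; ring]; exact cos_pi_div_three
  have s1 : sin (2 * π * ((1:ℕ) : ℝ) / 6) = Real.sqrt 3 / 2 := by
    rw [show 2 * π * ((1:ℕ):ℝ) / 6 = π/3 by push_cast; ring]; exact sin_pi_div_three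
  have c2 : cos (2 * π * ((2:ℕ) : ℝ) / 6) = -(1/2) := by
    rw [show 2 * π * ((2:ℕ):ℝ) / 6 = π - π/3 by push_cast; ring, cos_pi_sub, cos_pi_div_three]
  have s2 : sin (2 * π * ((2:ℕ) : ℝ) / 6) = Real.sqrt 3 / 2 := by
    rw [show 2 * π * ((2:ℕ):ℝ) / 6 = π - π/3 by push_cast; ring, sin_pi_sub, sin_pi_div_three]
  have c3 : cos (2 * π * ((3:ℕ) : ℝ) / 6) = -1 := by
    rw [show 2 * π * ((3:ℕ):ℝ) / 6 = π by push_cast; ring, cos_pi]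
  have s3 : sin (2 * π * ((3:ℕ) : ℝ) / 6) = 0 := by
    rw [show 2 * π * ((3:ℕ):ℝ) / 6 = π by push_cast; ring, sin_pi]
  have c4 : cos (2 * π * ((4:ℕ) : ℝ) / 6) = -(1/2) := by
    rw [show 2 * π * ((4:ℕ):ℝ) / 6 = π/3 + π by push_cast; ring, cos_add_pi, cos_pi_div_three]
  have s4 : sin (2 * π * ((4:ℕ) : ℝ) / 6) = -(Real.sqrt 3 / 2) := by
    rw [show 2 * π * ((4:ℕ):ℝ) / 6 = π/3 + π by push_cast; ring, sin_add, cos_pi, sin_pi,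
      sin_pi_div_three]
    ring
  have c5 : cos (2 * π * ((5:ℕ) : ℝ) / 6) = 1/2 := by
    rw [show 2 * π * ((5:ℕ):ℝ) / 6 = 2*π - π/3 by push_cast; ring, cos_two_pi_sub,
      cos_pi_div_three]
  have s5 : sin (2 * π * ((5:ℕ) : ℝ) / 6) = -(Real.sqrt 3 / 2) := by
    rw [show 2 * π * ((5:ℕ):ℝ) / 6 = 2*π - π/3 by push_cast; ring, sin_two_pi_sub,
      sin_pi_div_three]
  -- values of ZMod numerals
  have hv0 : ((0 : ZMod 6)).val = 0 := rfl
  have hv1 : ((1 : ZMod 6)).val = 1 := rfl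
  have hv2 : ((2 : ZMod 6)).val = 2 := rfl
  have hv3 : ((3 : ZMod 6)).val = 3 := rfl
  have hv4 : ((4 : ZMod 6)).val = 4 := rfl
  have hv5 : ((5 : ZMod 6)).val = 5 := rfl
  -- Gram entries
  have hval : ∀ (j k : ZMod 6), ∑ i, a j i * a k i =
      1 + cos (2 * π * (j.val : ℝ) / 6) * cos (2 * π * (k.val : ℝ) / 6)
        + sin (2 * π * (j.val : ℝ) / 6) * sin (2 * π * (k.val : ℝ) / 6) := by
    intro j k
    rw [hG, Fin.sum_univ_three]
    simp
  have hs3 : Real.sqrt 3 * Real.sqrt 3 = 3 := Real.mul_self_sqrt (by norm_num)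
  have g00 : ∑ i, a 0 i * a 0 i = 2 := by rw [hval, hv0, c0, s0]; norm_num
  have g11 : ∑ i, a 1 i * a 1 i = 2 := by rw [hval, hv1, c1, s1]; nlinarith [hs3]
  have g22 : ∑ i, a 2 i * a 2 i = 2 := by rw [hval, hv2, c2, s2]; nlinarith [hs3]
  have g33 : ∑ i, a 3 i * a 3 i = 2 := by rw [hval, hv3, c3, s3]; norm_num
  have g44 : ∑ i, a 4 i * a 4 i = 2 := by rw [hval, hv4, c4, s4]; nlinarith [hs3]
  have g55 : ∑ i, a 5 i * a 5 i = 2 := by rw [hval, hv5, c5, s5]; nlinarith [hs3]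
  have g03 : ∑ i, a 0 i * a 3 i = 0 := by rw [hval, hv0, hv3, c0, s0, c3, s3]; norm_num
  have g14 : ∑ i, a 1 i * a 4 i = 0 := by rw [hval, hv1, hv4, c1, s1, c4, s4]; nlinarith [hs3]
  have g25 : ∑ i, a 2 i * a 5 i = 0 := by rw [hval, hv2, hv5, c2, s2, c5, s5]; nlinarith [hs3]
  have g01 : ∑ i, a 0 i * a 1 i = 3/2 := by rw [hval, hv0, hv1, c0, s0, c1, s1]; norm_num
  have g04 : ∑ i, a 0 i * a 4 i = 1/2 := by rw [hval, hv0, hv4, c0, s0, c4, s4]; norm_num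
  have g31 : ∑ i, a 3 i * a 1 i = 1/2 := by rw [hval, hv3, hv1, c3, s3, c1, s1]; norm_num
  have g34 : ∑ i, a 3 i * a 4 i = 3/2 := by rw [hval, hv3, hv4, c3, s3, c4, s4]; norm_num
  have g12 : ∑ i, a 1 i * a 2 i = 3/2 := by rw [hval, hv1, hv2, c1, s1, c2, s2]; nlinarith [hs3]
  have g15 : ∑ i, a 1 i * a 5 i = 1/2 := by rw [hval, hv1, hv5, c1, s1, c5, s5]; nlinarith [hs3]
  have g42 : ∑ i, a 4 i * a 2 i = 1/2 := by rw [hval, hv4, hv2, c4, s4, c2, s2]; nlinarith [hs3]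
  have g45 : ∑ i, a 4 i * a 5 i = 3/2 := by rw [hval, hv4, hv5, c4, s4, c5, s5]; nlinarith [hs3]
  have g05 : ∑ i, a 0 i * a 5 i = 3/2 := by rw [hval, hv0, hv5, c0, s0, c5, s5]; norm_num
  have g23 : ∑ i, a 2 i * a 3 i = 3/2 := by rw [hval, hv2, hv3, c2, s2, c3, s3]; norm_num
  -- pointwise products vanish for antipodal pairs
  have p03 : ∀ i, a 0 i * a 3 i = 0 := fun i =>
    (Finset.sum_eq_zero_iff_of_nonneg (fun i _ => mul_nonneg (hnn 0 i) (hnn 3 i))).1 g03 i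
      (Finset.mem_univ i)
  have p14 : ∀ i, a 1 i * a 4 i = 0 := fun i =>
    (Finset.sum_eq_zero_iff_of_nonneg (fun i _ => mul_nonneg (hnn 1 i) (hnn 4 i))).1 g14 i
      (Finset.mem_univ i)
  have p25 : ∀ i, a 2 i * a 5 i = 0 := fun i =>
    (Finset.sum_eq_zero_iff_of_nonneg (fun i _ => mul_nonneg (hnn 2 i) (hnn 5 i))).1 g25 i
      (Finset.mem_univ i)
  -- a0 + a3 = a1 + a4 pointwise
  have e1 : ∀ i, a 0 i + a 3 i = a 1 i + a 4 i := by
    have hsq : ∑ i, (a 0 i + a 3 i - a 1 i - a 4 i)^2 = 0 := by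
      have expand : ∑ i, (a 0 i + a 3 i - a 1 i - a 4 i)^2 =
          (∑ i, a 0 i * a 0 i) + (∑ i, a 3 i * a 3 i) + (∑ i, a 1 i * a 1 i)
          + (∑ i, a 4 i * a 4 i) + 2*(∑ i, a 0 i * a 3 i) + 2*(∑ i, a 1 i * a 4 i)
          - 2*(∑ i, a 0 i * a 1 i) - 2*(∑ i, a 0 i * a 4 i) - 2*(∑ i, a 3 i * a 1 i)
          - 2*(∑ i, a 3 i * a 4 i) := by
        simp only [Finset.mul_sum, ← Finset.sum_add_distrib, ← Finset.sum_sub_distrib]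
        exact Finset.sum_congr rfl fun i _ => by ring
      rw [expand, g00, g33, g11, g44, g03, g14, g01, g04, g31, g34]; norm_num
    intro i
    have := (Finset.sum_eq_zero_iff_of_nonneg (fun i _ => sq_nonneg _)).1 hsq i
      (Finset.mem_univ i)
    have := pow_eq_zero_iff (n := 2) (by norm_num) |>.1 this
    linarith
  have e2 : ∀ i, a 1 i + a 4 i = a 2 i + a 5 i := by
    have hsq : ∑ i, (a 1 i + a 4 i - a 2 i - a 5 i)^2 = 0 := by
      have expand : ∑ i, (a 1 i + a 4 i - a 2 i - a 5 i)^2 =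
          (∑ i, a 1 i * a 1 i) + (∑ i, a 4 i * a 4 i) + (∑ i, a 2 i * a 2 i)
          + (∑ i, a 5 i * a 5 i) + 2*(∑ i, a 1 i * a 4 i) + 2*(∑ i, a 2 i * a 5 i)
          - 2*(∑ i, a 1 i * a 2 i) - 2*(∑ i, a 1 i * a 5 i) - 2*(∑ i, a 4 i * a 2 i)
          - 2*(∑ i, a 4 i * a 5 i) := by
        simp only [Finset.mul_sum, ← Finset.sum_add_distrib, ← Finset.sum_sub_distrib]
        exact Finset.sum_congr rfl fun i _ => by ring
      rw [expand, g11, g44, g22, g55, g14, g25, g12, g15, g42, g45]; norm_num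
    intro i
    have := (Finset.sum_eq_zero_iff_of_nonneg (fun i _ => sq_nonneg _)).1 hsq i
      (Finset.mem_univ i)
    have := pow_eq_zero_iff (n := 2) (by norm_num) |>.1 this
    linarith
  -- final contradiction
  have hsum : ∑ i, (a 0 i * a 4 i + a 1 i * a 3 i + a 1 i * a 5 i + a 2 i * a 4 i
      - a 0 i * a 5 i - a 2 i * a 3 i) = -1 := by
    have expand : ∑ i, (a 0 i * a 4 i + a 1 i * a 3 i + a 1 i * a 5 i + a 2 i * a 4 i
        - a 0 i * a 5 i - a 2 i * a 3 i) =
        (∑ i, a 0 i * a 4 i) + (∑ i, a 3 i * a 1 i) + (∑ i, a 1 i * a 5 i)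
        + (∑ i, a 4 i * a 2 i) - (∑ i, a 0 i * a 5 i) - (∑ i, a 2 i * a 3 i) := by
      simp only [Finset.mul_sum, ← Finset.sum_add_distrib, ← Finset.sum_sub_distrib]
      exact Finset.sum_congr rfl fun i _ => by ring
    rw [expand, g04, g31, g15, g42, g05, g23]; norm_num
  have hpos : 0 ≤ ∑ i, (a 0 i * a 4 i + a 1 i * a 3 i + a 1 i * a 5 i + a 2 i * a 4 i
      - a 0 i * a 5 i - a 2 i * a 3 i) :=
    Finset.sum_nonneg fun i _ => hex_key_ineq (a 0 i) (a 1 i) (a 2 i) (a 3 i) (a 4 i) (a 5 i)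
      (hnn 0 i) (hnn 1 i) (hnn 2 i)
      (hnn 3 i) (hnn 4 i) (hnn 5 i) (p03 i) (p14 i) (p25 i) (e1 i) (e2 i)
  linarith [hsum, hpos]
end

section
/- Let e ∈ ℝ^d, e ≠ 0, and let b_0, b_2, b_4 ∈ ℝ^d be vectors such that e + b_k and e − b_k have all coordinates nonnegative and |b_k| = |e| for each k ∈ {0,2,4}. Then b_0 + b_2 + b_4 ≠ 0. -/
/-!
Since `e i + b i` and `e i - b i` are nonnegative, `|b i| ≤ e i`, so `b i ^ 2 ≤ e i ^ 2` for every
coordinate; equality of the sums of squares then forces `b i = ± e i`. At a coordinate where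
`e i ≠ 0`, the sum of three values `± e i` is `± e i` or `± 3 e i`, hence nonzero.
-/

section

variable {R : Type*} [CommRing R] [LinearOrder R] [IsStrictOrderedRing R]

theorem eq_or_eq_neg_of_nonneg_add_of_nonneg_sub_of_sum_sq_eq {ι : Type*} [Fintype ι]
    {b e : ι → R} (hadd : ∀ i, 0 ≤ e i + b i) (hsub : ∀ i, 0 ≤ e i - b i)
    (hsq : ∑ i, b i ^ 2 = ∑ i, e i ^ 2) (i : ι) :
    b i = e i ∨ b i = -e i := by
  have hle : ∀ j ∈ Finset.univ, b j ^ 2 ≤ e j ^ 2 := fun j _ =>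
    sq_le_sq' (by linarith [hadd j]) (by linarith [hsub j])
  have hsq_eq : b i ^ 2 = e i ^ 2 :=
    (Finset.sum_eq_sum_iff_of_le hle).mp hsq i (Finset.mem_univ i)
  exact sq_eq_sq_iff_eq_or_eq_neg.mp hsq_eq

theorem add_add_ne_zero_of_eq_or_eq_neg {a x y z : R} (ha : a ≠ 0)
    (hx : x = a ∨ x = -a) (hy : y = a ∨ y = -a) (hz : z = a ∨ z = -a) :
    x + y + z ≠ 0 := by
  rcases ha.lt_or_gt with ha | ha <;>
    rcases hx with rfl | rfl <;> rcases hy with rfl | rfl <;> rcases hz with rfl | rfl <;>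
    intro h <;> linarith

end

theorem sum_of_three_sign_flips_ne_zero {d : ℕ} (e b₀ b₂ b₄ : Fin d → ℝ)
    (he : e ≠ 0)
    (hpos : ∀ b ∈ ({b₀, b₂, b₄} : Set (Fin d → ℝ)),
      (∀ i, 0 ≤ e i + b i) ∧ (∀ i, 0 ≤ e i - b i))
    (hnorm : ∀ b ∈ ({b₀, b₂, b₄} : Set (Fin d → ℝ)),
      ∑ i, b i ^ 2 = ∑ i, e i ^ 2) :
    b₀ + b₂ + b₄ ≠ 0 := by
  have hsign : ∀ b ∈ ({b₀, b₂, b₄} : Set (Fin d → ℝ)), ∀ i, b i = e i ∨ b i = -e i :=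
    fun b hb => eq_or_eq_neg_of_nonneg_add_of_nonneg_sub_of_sum_sq_eq
      (hpos b hb).1 (hpos b hb).2 (hnorm b hb)
  obtain ⟨i, hi⟩ := Function.ne_iff.mp he
  intro hsum
  exact add_add_ne_zero_of_eq_or_eq_neg hi (hsign b₀ (by simp) i) (hsign b₂ (by simp) i)
    (hsign b₄ (by simp) i) (congrFun hsum i)
end

section
/- For k ∈ ℤ/5ℤ let v_k = (√(cos(π/5)), cos(2πk/5), sin(2πk/5)) ∈ ℝ³. Then ⟨v_j, v_k⟩ ≥ 0 for all j, k ∈ ℤ/5ℤ; specifically ⟨v_k, v_{k±1}⟩ = cos(π/5) + cos(2π/5) > 0 and ⟨v_k, v_{k±2}⟩ = cos(π/5) + cos(4π/5) = 0. -/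
open Real

lemma cos_pi5_pos : 0 < Real.cos (π / 5) := by
  apply Real.cos_pos_of_mem_Ioo
  constructor <;> [linarith [pi_pos]; linarith [pi_pos]]

lemma cosA : Real.cos (2 * π * 4 / 5) = Real.cos (2 * π / 5) := by
  rw [show 2 * π * 4 / 5 = -(2 * π / 5) + 2 * π by ring, Real.cos_add_two_pi, Real.cos_neg]

lemma cosB : Real.cos (2 * π * 3 / 5) = Real.cos (4 * π / 5) := by
  rw [show 2 * π * 3 / 5 = -(4 * π / 5) + 2 * π by ring, Real.cos_add_two_pi, Real.cos_neg]

lemma cosC : Real.cos (2 * π * 2 / 5) = Real.cos (4 * π / 5) := by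
  congr 1; ring

lemma cos_4pi5 : Real.cos (4 * π / 5) = -((1 + Real.sqrt 5) / 4) := by
  rw [show 4 * π / 5 = π - π / 5 by ring, Real.cos_pi_sub, Real.cos_pi_div_five]

lemma cos_2pi5 : Real.cos (2 * π / 5) = (Real.sqrt 5 - 1) / 4 := by
  have h5 : Real.sqrt 5 * Real.sqrt 5 = 5 := Real.mul_self_sqrt (by norm_num)
  rw [show 2 * π / 5 = 2 * (π / 5) by ring, Real.cos_two_mul, Real.cos_pi_div_five]
  nlinarith [h5]

lemma cosd (d : ℤ) : Real.cos (2 * π * d / 5) = Real.cos (2 * π * ((d % 5 : ℤ) : ℝ) / 5) := by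
  have hd : d = 5 * (d / 5) + d % 5 := (Int.mul_ediv_add_emod d 5).symm
  nth_rewrite 1 [hd]
  push_cast
  rw [show 2 * π * (5 * ((d / 5 : ℤ) : ℝ) + ((d % 5 : ℤ) : ℝ)) / 5
      = 2 * π * ((d % 5 : ℤ) : ℝ) / 5 + ((d / 5 : ℤ) : ℝ) * (2 * π) by ring,
    Real.cos_add_int_mul_two_pi]

lemma nonneg_d (d : ℤ) : 0 ≤ Real.cos (π / 5) + Real.cos (2 * π * d / 5) := by
  rw [cosd]
  have h0 : 0 ≤ d % 5 := Int.emod_nonneg d (by norm_num)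
  have h5 : d % 5 < 5 := Int.emod_lt_of_pos d (by norm_num)
  have hs : 0 ≤ Real.sqrt 5 := Real.sqrt_nonneg 5
  interval_cases h : d % 5 <;> push_cast <;> norm_num <;>
    nlinarith [cos_pi5_pos, cosA, cosB, cosC, cos_4pi5, cos_2pi5, Real.cos_pi_div_five]
theorem pentagon_inner_products :
    let v : ZMod 5 → Fin 3 → ℝ := fun k =>
      ![Real.sqrt (cos (π / 5)), cos (2 * π * (k.val : ℝ) / 5),
        sin (2 * π * (k.val : ℝ) / 5)]
    (∀ j k : ZMod 5, 0 ≤ ∑ i, v j i * v k i) ∧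
    (∀ k : ZMod 5, ∑ i, v k i * v (k + 1) i = cos (π / 5) + cos (2 * π / 5)) ∧
    (∀ k : ZMod 5, ∑ i, v k i * v (k - 1) i = cos (π / 5) + cos (2 * π / 5)) ∧
    0 < cos (π / 5) + cos (2 * π / 5) ∧
    (∀ k : ZMod 5, ∑ i, v k i * v (k + 2) i = cos (π / 5) + cos (4 * π / 5)) ∧
    (∀ k : ZMod 5, ∑ i, v k i * v (k - 2) i = cos (π / 5) + cos (4 * π / 5)) ∧
    cos (π / 5) + cos (4 * π / 5) = 0 := by
  intro v
  have key : ∀ j k : ZMod 5, ∑ i, v j i * v k i =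
      cos (π / 5) + cos (2 * π * (((j.val : ℤ) - (k.val : ℤ) : ℤ) : ℝ) / 5) := by
    intro j k
    simp only [v, Fin.sum_univ_three, Matrix.cons_val_zero, Matrix.cons_val_one,
      Matrix.head_cons, Matrix.cons_val_two, Matrix.tail_cons]
    rw [Real.mul_self_sqrt cos_pi5_pos.le, add_assoc, ← Real.cos_sub]
    congr 2
    push_cast
    ring
  have hsqrt5 : (0:ℝ) < Real.sqrt 5 := Real.sqrt_pos.mpr (by norm_num)
  refine ⟨?_, ?_, ?_, ?_, ?_, ?_, ?_⟩
  · intro j k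
    rw [key]
    exact nonneg_d _
  · intro k
    rw [key, cosd]
    have hm : (((k.val : ℤ) - (((k + 1 : ZMod 5)).val : ℤ)) % 5 : ℤ) = 4 := by
      fin_cases k <;> decide
    rw [hm]
    norm_num [cosA]
  · intro k
    rw [key, cosd]
    have hm : (((k.val : ℤ) - (((k - 1 : ZMod 5)).val : ℤ)) % 5 : ℤ) = 1 := by
      fin_cases k <;> decide
    rw [hm]
    norm_num
  · rw [Real.cos_pi_div_five, cos_2pi5]
    linarith
  · intro k
    rw [key, cosd]
    have hm : (((k.val : ℤ) - (((k + 2 : ZMod 5)).val : ℤ)) % 5 : ℤ) = 3 := by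
      fin_cases k <;> decide
    rw [hm]
    norm_num [cosB]
  · intro k
    rw [key, cosd]
    have hm : (((k.val : ℤ) - (((k - 2 : ZMod 5)).val : ℤ)) % 5 : ℤ) = 2 := by
      fin_cases k <;> decide
    rw [hm]
    norm_num [cosC]
  · rw [Real.cos_pi_div_five, cos_4pi5]
    ring
end

section
/- For k ∈ ℤ/5ℤ let v_k = (√(cos(π/5)), cos(2πk/5), sin(2πk/5)) ∈ ℝ³. There is no d ∈ ℕ and positive semidefinite matrices A_0, …, A_4 ∈ M_d(ℂ) such that (1/d)·Tr(A_j A_k) = ⟨v_j, v_k⟩ for all j, k ∈ ℤ/5ℤ. -/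
/-!
If `(1/d) Tr(A_j A_k) = ⟨v_j, v_k⟩`, then `A ↦ v` is an isometry for the trace form (up to the
factor `d`), so every real linear relation among the `v_k` also holds among the `A_k`. Moreover
`Tr(A_k A_{k+2}) = 0` forces `A_k A_{k+2} = 0`, both matrices being positive semidefinite.
Multiplying the relation `A_k - A_{k+3} = 2 cos(π/5) (A_{k+1} - A_{k+2})` by `A_k` and by `A_{k+3}`
shows that all `A_k²` coincide, so `A_0⁴ = A_0 (A_0 A_2) A_2 = 0`, whence `A_0 = 0`, contradicting
`⟨v_0, v_0⟩ = 1 + cos(π/5) > 0`.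
-/

open Real
open scoped ComplexOrder

namespace Matrix

open scoped MatrixOrder in
theorem PosSemidef.mul_eq_zero_of_trace_mul_eq_zero {𝕜 n : Type*} [RCLike 𝕜] [Fintype n]
    {A B : Matrix n n 𝕜} (hA : A.PosSemidef) (hB : B.PosSemidef) (h : (A * B).trace = 0) :
    A * B = 0 := by
  classical
  obtain ⟨X, rfl⟩ := CStarAlgebra.nonneg_iff_eq_star_mul_self.mp hA.nonneg
  obtain ⟨Y, rfl⟩ := CStarAlgebra.nonneg_iff_eq_star_mul_self.mp hB.nonneg
  simp only [star_eq_conjTranspose] at h ⊢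
  have hYX : Y * Xᴴ = 0 := by
    rw [← trace_conjTranspose_mul_self_eq_zero_iff, ← h, conjTranspose_mul,
      conjTranspose_conjTranspose, ← Matrix.mul_assoc, trace_mul_comm]
    simp only [Matrix.mul_assoc]
  calc Xᴴ * X * (Yᴴ * Y) = Xᴴ * (Y * Xᴴ)ᴴ * Y := by simp [Matrix.mul_assoc]
    _ = 0 := by simp [hYX]

theorem sum_smul_eq_zero_of_trace_mul_eq_dotProduct {𝕜 ι n m : Type*} [RCLike 𝕜] [Fintype ι]
    [Fintype n] [Fintype m] {A : ι → Matrix n n 𝕜} (hA : ∀ i, (A i).IsHermitian)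
    {v : ι → m → ℝ} {r : ℝ} (hAv : ∀ i j, (A i * A j).trace = r * (v i ⬝ᵥ v j : ℝ)) {a : ι → ℝ}
    (ha : ∑ i, a i • v i = 0) : ∑ i, (a i : 𝕜) • A i = 0 := by
  rw [← trace_conjTranspose_mul_self_eq_zero_iff]
  calc ((∑ i, (a i : 𝕜) • A i)ᴴ * ∑ i, (a i : 𝕜) • A i).trace
      = ∑ i, ∑ j, (a i * a j : 𝕜) * (A i * A j).trace := by
        simp only [conjTranspose_sum, conjTranspose_smul, (hA _).eq, Finset.sum_mul_sum,
          trace_sum, smul_mul_smul_comm, trace_smul, RCLike.star_def, RCLike.conj_ofReal,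
          smul_eq_mul]
    _ = r * ((∑ i, a i • v i) ⬝ᵥ ∑ j, a j • v j : ℝ) := by
        rw [sum_dotProduct]
        simp only [hAv, dotProduct_sum, smul_dotProduct, dotProduct_smul, smul_eq_mul,
          RCLike.ofReal_sum, RCLike.ofReal_mul, Finset.mul_sum]
        exact Finset.sum_congr rfl fun i _ ↦ Finset.sum_congr rfl fun j _ ↦ by ring
    _ = 0 := by simp [ha]

theorem mul_self_eq_zero_of_pentagon_relations {𝕜 n : Type*} [RCLike 𝕜] [Fintype n]
    {A : ZMod 5 → Matrix n n 𝕜} (hA : ∀ k, (A k).IsHermitian)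
    (horth : ∀ k, A k * A (k + 2) = 0) {t : ℝ}
    (hrel : ∀ k, A k - A (k + 3) = (t : 𝕜) • (A (k + 1) - A (k + 2))) (k : ZMod 5) :
    A k * A k = 0 := by
  have horth' : ∀ k, A k * A (k + 3) = 0 := fun k ↦ by
    have h := congrArg conjTranspose (horth (k + 3))
    rwa [conjTranspose_mul, (hA _).eq, (hA _).eq, show k + 3 + 2 = k by grind,
      conjTranspose_zero] at h
  have sq_succ : ∀ k, A k * A k = (t : 𝕜) • (A k * A (k + 1)) := fun k ↦ by
    simpa [mul_sub, horth, horth'] using congrArg (A k * ·) (hrel k)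
  have sq_pred : ∀ k, A (k + 1) * A (k + 1) = (t : 𝕜) • (A (k + 1) * A k) := fun k ↦ by
    have h := congrArg (A (k + 1) * ·) (hrel (k + 3))
    rw [show k + 3 = k + 1 + 2 by grind, show k + 1 + 2 + 3 = k + 1 by grind,
      show k + 1 + 2 + 1 = k + 1 + 3 by grind, show k + 1 + 2 + 2 = k by grind] at h
    simpa [mul_sub, horth, horth'] using h
  have sq_eq : ∀ k, A (k + 1) * A (k + 1) = A k * A k := fun k ↦ calc
    A (k + 1) * A (k + 1) = (t : 𝕜) • (A (k + 1) * A k) := sq_pred k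
    _ = ((t : 𝕜) • (A k * A (k + 1)))ᴴ := by simp [(hA k).eq, (hA (k + 1)).eq]
    _ = (A k * A k)ᴴ := by rw [sq_succ]
    _ = A k * A k := by rw [conjTranspose_mul, (hA k).eq]
  refine conjTranspose_mul_self_eq_zero.mp ?_
  calc (A k * A k)ᴴ * (A k * A k) = A k * A k * (A (k + 2) * A (k + 2)) := by
        rw [conjTranspose_mul, (hA k).eq, show k + 2 = k + 1 + 1 by grind, sq_eq, sq_eq]
    _ = A k * (A k * A (k + 2)) * A (k + 2) := by simp only [Matrix.mul_assoc]
    _ = 0 := by rw [horth, Matrix.mul_zero, Matrix.zero_mul]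

end Matrix

noncomputable def pentagonAngle (k : ZMod 5) : ℝ := 2 * π * (k.val : ℝ) / 5

noncomputable def pentagonVector (k : ZMod 5) : Fin 3 → ℝ :=
  ![√(cos (π / 5)), cos (pentagonAngle k), sin (pentagonAngle k)]

lemma exists_pentagonAngle_add (k m : ZMod 5) :
    ∃ n : ℕ, pentagonAngle k + pentagonAngle m = pentagonAngle (k + m) + n * (2 * π) := by
  refine ⟨(k.val + m.val) / 5, ?_⟩
  have h : ((k.val + m.val : ℕ) : ℝ) = (k + m).val + 5 * ((k.val + m.val) / 5 : ℕ) := by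
    rw [ZMod.val_add]
    exact_mod_cast (Nat.mod_add_div _ 5).symm
  simp only [pentagonAngle]
  push_cast at h
  linear_combination (2 * π / 5) * h

lemma cos_pentagonAngle_add (k m : ZMod 5) :
    cos (pentagonAngle (k + m)) = cos (pentagonAngle k + pentagonAngle m) := by
  obtain ⟨n, hn⟩ := exists_pentagonAngle_add k m
  rw [hn, cos_add_nat_mul_two_pi]

lemma sin_pentagonAngle_add (k m : ZMod 5) :
    sin (pentagonAngle (k + m)) = sin (pentagonAngle k + pentagonAngle m) := by
  obtain ⟨n, hn⟩ := exists_pentagonAngle_add k m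
  rw [hn, sin_add_nat_mul_two_pi]

lemma pentagonAngle_zero : pentagonAngle 0 = 0 := by simp [pentagonAngle]

lemma pentagonAngle_one : pentagonAngle 1 = 2 * (π / 5) := by
  rw [pentagonAngle, show (1 : ZMod 5).val = 1 from rfl]; push_cast; ring

lemma pentagonAngle_two : pentagonAngle 2 = π - π / 5 := by
  rw [pentagonAngle, show (2 : ZMod 5).val = 2 from rfl]; push_cast; ring

lemma pentagonAngle_three : pentagonAngle 3 = π / 5 + π := by
  rw [pentagonAngle, show (3 : ZMod 5).val = 3 from rfl]; push_cast; ring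

lemma Real.cos_pi_div_five_nonneg : 0 ≤ cos (π / 5) := by
  rw [cos_pi_div_five]; positivity

lemma pentagonVector_dotProduct_add (k m : ZMod 5) :
    pentagonVector k ⬝ᵥ pentagonVector (k + m) = cos (π / 5) + cos (pentagonAngle m) := by
  simp only [pentagonVector, dotProduct, Fin.sum_univ_three, Matrix.cons_val_zero,
    Matrix.cons_val_one, Matrix.cons_val_two, Matrix.head_cons, Matrix.tail_cons,
    mul_self_sqrt cos_pi_div_five_nonneg, cos_pentagonAngle_add, sin_pentagonAngle_add, cos_add,
    sin_add]
  linear_combination cos (pentagonAngle m) * sin_sq_add_cos_sq (pentagonAngle k)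

lemma pentagonVector_dotProduct_self (k : ZMod 5) :
    pentagonVector k ⬝ᵥ pentagonVector k = cos (π / 5) + 1 := by
  simpa [pentagonAngle_zero] using pentagonVector_dotProduct_add k 0

lemma pentagonVector_dotProduct_add_two (k : ZMod 5) :
    pentagonVector k ⬝ᵥ pentagonVector (k + 2) = 0 := by
  rw [pentagonVector_dotProduct_add, pentagonAngle_two, cos_pi_sub, add_neg_cancel]

lemma pentagonVector_sub_add_three (k : ZMod 5) :
    pentagonVector k - pentagonVector (k + 3) =
      (2 * cos (π / 5)) • (pentagonVector (k + 1) - pentagonVector (k + 2)) := by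
  have hq := quadratic_root_cos_pi_div_five
  ext i
  fin_cases i <;>
    simp only [pentagonVector, cos_pentagonAngle_add, sin_pentagonAngle_add, cos_add, sin_add,
      pentagonAngle_one, pentagonAngle_two, pentagonAngle_three, cos_two_mul, sin_two_mul,
      cos_pi_sub, sin_pi_sub, cos_pi, sin_pi, Pi.sub_apply, Pi.smul_apply, smul_eq_mul,
      Fin.zero_eta, Fin.mk_one, Fin.reduceFinMk, Matrix.cons_val_zero, Matrix.cons_val_one,
      Matrix.cons_val_two, Matrix.head_cons, Matrix.tail_cons]
  · ring
  · linear_combination (sin (pentagonAngle k) * sin (π / 5) -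
      cos (pentagonAngle k) * (cos (π / 5) + 1)) * hq
  · linear_combination -(sin (pentagonAngle k) * (cos (π / 5) + 1) +
      cos (pentagonAngle k) * sin (π / 5)) * hq

open Matrix in
theorem pentagon_not_realizable_by_posSemidef_matrices :
    ¬ ∃ (d : ℕ), 0 < d ∧ ∃ A : ZMod 5 → Matrix (Fin d) (Fin d) ℂ,
      (∀ k, (A k).PosSemidef) ∧
      ∀ j k : ZMod 5, (1 / (d : ℂ)) * (A j * A k).trace =
        ((∑ i, (![Real.sqrt (cos (π / 5)), cos (2 * π * (j.val : ℝ) / 5),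
                  sin (2 * π * (j.val : ℝ) / 5)] i) *
                (![Real.sqrt (cos (π / 5)), cos (2 * π * (k.val : ℝ) / 5),
                  sin (2 * π * (k.val : ℝ) / 5)] i) : ℝ) : ℂ) := by
  rintro ⟨d, hd, A, hA, hG⟩
  have hGram : ∀ j k,
      (A j * A k).trace = (d : ℝ) * (pentagonVector j ⬝ᵥ pentagonVector k : ℝ) := fun j k ↦ by
    have h : (1 / (d : ℂ)) * (A j * A k).trace = (pentagonVector j ⬝ᵥ pentagonVector k : ℝ) :=
      hG j k
    rw [← h, Complex.ofReal_natCast]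
    field_simp
  have horth : ∀ k, A k * A (k + 2) = 0 := fun k ↦
    (hA k).mul_eq_zero_of_trace_mul_eq_zero (hA (k + 2))
      (by simp [hGram, pentagonVector_dotProduct_add_two])
  have hrel : ∀ k, A k - A (k + 3) =
      ((2 * cos (π / 5) : ℝ) : ℂ) • (A (k + 1) - A (k + 2)) := fun k ↦ by
    have h := sum_smul_eq_zero_of_trace_mul_eq_dotProduct (A := A ∘ ![k, k + 3, k + 1, k + 2])
      (v := pentagonVector ∘ ![k, k + 3, k + 1, k + 2])
      (a := ![1, -1, -(2 * cos (π / 5)), 2 * cos (π / 5)]) (fun _ ↦ (hA _).isHermitian)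
      (fun _ _ ↦ hGram _ _)
    simp only [Fin.sum_univ_four, Function.comp_apply, cons_val_zero, cons_val_one, cons_val_two,
      cons_val_three, head_cons, tail_cons, RCLike.ofReal_eq_complex_ofReal, Complex.ofReal_one,
      Complex.ofReal_neg, one_smul, neg_smul] at h
    linear_combination (norm := module)
      h (by linear_combination (norm := module) pentagonVector_sub_add_three k)
  have hA0 := mul_self_eq_zero_of_pentagon_relations (fun k ↦ (hA k).isHermitian) horth hrel 0
  have h00 := hGram 0 0
  rw [hA0, trace_zero, pentagonVector_dotProduct_self] at h00
  have hpos : (0 : ℝ) < d * (cos (π / 5) + 1) := by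
    have := cos_pi_div_five_nonneg
    positivity
  exact hpos.ne' (by exact_mod_cast h00.symm)
end

section
/- Let A_0, …, A_4 be positive semidefinite matrices in M_d(ℂ) with A_k A_{k+2} = 0 for all k ∈ ℤ/5ℤ (indices mod 5), and suppose each A_{k+1} lies in the real span of A_k, A_{k+2}, A_{k+3}, and Tr(A_k A_{k+1}) > 0 for every k. Then ℝ·A_0 = ℝ·A_1, i.e., A_0 and A_1 are proportional. -/
open scoped ComplexOrder

/-!
Multiplying a span condition `A (k+1) ∈ ℝ ∙ {A k, A (k+2), A (k+3)}` on the left or on the right by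
a neighbour, the relations `A i * A (i ± 2) = 0` kill every term outside `ℝ ∙ A k²` or `ℝ ∙ A (k+1)²`,
so `A₀ A₁` is a real multiple of both `A₀²` and `A₁²`. Since `tr (A₀ A₁) > 0` and squares of
Hermitian matrices have nonnegative trace, both multiples are positive, hence `A₀² = c A₁²` with
`c > 0`, and uniqueness of positive square roots gives `A₀ = √c A₁`.
-/

open Submodule

section SpanMul

variable {K R : Type*} [CommSemiring K] [Semiring R] [Algebra K R] {s : Set R} {a m : R}
  {P : Submodule K R}

theorem Submodule.mul_mem_of_mem_span_left (hm : m ∈ span K s) (hs : ∀ x ∈ s, a * x ∈ P) :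
    a * m ∈ P :=
  span_le (p := P.comap (LinearMap.mulLeft K a)) |>.mpr hs hm

theorem Submodule.mul_mem_of_mem_span_right (hm : m ∈ span K s) (hs : ∀ x ∈ s, x * a ∈ P) :
    m * a ∈ P :=
  span_le (p := P.comap (LinearMap.mulRight K a)) |>.mpr hs hm

end SpanMul

structure IsPentagon (K : Type*) {R : Type*} [CommSemiring K] [Semiring R] [Algebra K R]
    (A : ZMod 5 → R) : Prop where
  mul_add_two_eq_zero : ∀ k, A k * A (k + 2) = 0
  add_two_mul_eq_zero : ∀ k, A (k + 2) * A k = 0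
  mem_span : ∀ k, A (k + 1) ∈ span K {A k, A (k + 2), A (k + 3)}

namespace IsPentagon

variable {K R : Type*} [CommSemiring K] [Semiring R] [Algebra K R] {A : ZMod 5 → R}

theorem mul_succ_mem_span_mul_self (h : IsPentagon K A) (k : ZMod 5) :
    A k * A (k + 1) ∈ span K {A k * A k} := by
  refine mul_mem_of_mem_span_left (h.mem_span k) ?_
  rintro _ (rfl | rfl | rfl)
  · exact mem_span_singleton_self _
  · simp [h.mul_add_two_eq_zero k]
  · have h0 := h.add_two_mul_eq_zero (k + 3)
    rw [show k + 3 + 2 = k by grind] at h0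
    simp [h0]

theorem succ_mul_mem_span_mul_self (h : IsPentagon K A) (k : ZMod 5) :
    A (k + 1) * A k ∈ span K {A k * A k} := by
  refine mul_mem_of_mem_span_right (h.mem_span k) ?_
  rintro _ (rfl | rfl | rfl)
  · exact mem_span_singleton_self _
  · simp [h.add_two_mul_eq_zero k]
  · have h0 := h.mul_add_two_eq_zero (k + 3)
    rw [show k + 3 + 2 = k by grind] at h0
    simp [h0]

theorem mul_succ_mem_span_succ_mul_self (h : IsPentagon K A) (k : ZMod 5) :
    A k * A (k + 1) ∈ span K {A (k + 1) * A (k + 1)} := by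
  have hk := h.mem_span (k + 4)
  rw [show k + 4 + 1 = k by grind, show k + 4 + 2 = k + 1 by grind,
    show k + 4 + 3 = k + 1 + 1 by grind] at hk
  refine mul_mem_of_mem_span_right hk ?_
  rintro _ (rfl | rfl | rfl)
  · have h0 := h.mul_add_two_eq_zero (k + 4)
    rw [show k + 4 + 2 = k + 1 by grind] at h0
    simp [h0]
  · exact mem_span_singleton_self _
  · exact h.succ_mul_mem_span_mul_self (k + 1)

end IsPentagon

namespace Matrix

variable {n : Type*} [Fintype n]

theorem IsHermitian.exists_pos_smul_of_mem_span_mul_self {X M : Matrix n n ℂ} (hX : X.IsHermitian)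
    (hM : M ∈ span ℝ {X * X}) (htr : ∃ r : ℝ, 0 < r ∧ M.trace = r) :
    ∃ p : ℝ, 0 < p ∧ M = p • (X * X) := by
  obtain ⟨p, rfl⟩ := mem_span_singleton.mp hM
  obtain ⟨r, hr, hpr⟩ := htr
  have hXX : 0 ≤ (X * X).trace := by
    simpa only [hX.eq] using (posSemidef_conjTranspose_mul_self X).trace_nonneg
  refine ⟨p, ?_, rfl⟩
  by_contra! hp
  have hr' : (r : ℂ) ≤ 0 := by
    rw [← hpr, trace_smul, Complex.real_smul]
    exact mul_nonpos_of_nonpos_of_nonneg (by exact_mod_cast hp) hXX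
  exact hr.not_ge (by exact_mod_cast hr')

open scoped MatrixOrder in
theorem PosSemidef.eq_sqrt_smul_of_mul_self_eq_smul [DecidableEq n] {X Y : Matrix n n ℂ}
    (hX : X.PosSemidef) (hY : Y.PosSemidef) {c : ℝ} (hc : 0 ≤ c) (h : X * X = c • (Y * Y)) :
    X = √c • Y := by
  have hcY : 0 ≤ √c • Y := smul_nonneg (Real.sqrt_nonneg c) hY.nonneg
  rw [← CFC.sq_eq_sq_iff X _ hX.nonneg hcY, sq, sq, smul_mul_smul, Real.mul_self_sqrt hc, h]

end Matrix

theorem pentagon_algebraic_core {d : ℕ} (A : ZMod 5 → Matrix (Fin d) (Fin d) ℂ)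
    (hpos : ∀ k, (A k).PosSemidef)
    (horth : ∀ k : ZMod 5, A k * A (k + 2) = 0)
    (hspan : ∀ k : ZMod 5,
      A (k + 1) ∈ Submodule.span ℝ ({A k, A (k + 2), A (k + 3)} : Set (Matrix (Fin d) (Fin d) ℂ)))
    (htr : ∀ k : ZMod 5, ∃ r : ℝ, 0 < r ∧ (A k * A (k + 1)).trace = (r : ℂ)) :
    Submodule.span ℝ ({A 0} : Set (Matrix (Fin d) (Fin d) ℂ))
      = Submodule.span ℝ ({A 1} : Set (Matrix (Fin d) (Fin d) ℂ)) := by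
  have hA : IsPentagon ℝ A := by
    refine ⟨horth, fun k ↦ ?_, hspan⟩
    simpa [(hpos k).1.eq, (hpos (k + 2)).1.eq] using congrArg Matrix.conjTranspose (horth k)
  obtain ⟨p, hp, hp01⟩ :=
    (hpos 0).1.exists_pos_smul_of_mem_span_mul_self (hA.mul_succ_mem_span_mul_self 0) (htr 0)
  obtain ⟨q, hq, hq01⟩ :=
    (hpos 1).1.exists_pos_smul_of_mem_span_mul_self (hA.mul_succ_mem_span_succ_mul_self 0) (htr 0)
  simp only [zero_add] at hp01 hq01
  have hsq : A 0 * A 0 = (q / p) • (A 1 * A 1) := by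
    rw [div_eq_inv_mul, ← smul_smul, ← hq01, hp01, smul_smul, inv_mul_cancel₀ hp.ne', one_smul]
  rw [(hpos 0).eq_sqrt_smul_of_mul_self_eq_smul (hpos 1) (div_pos hq hp).le hsq,
    span_singleton_smul_eq (Real.sqrt_pos.mpr (div_pos hq hp)).ne'.isUnit]
end
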